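/- arXiv:math/0611417 — 3 statements merged into one kernel-verified Lean document; each statement's English description precedes it below -/
import Mathlib

section
/- Let m ≥ 2 and let f : [0,1] → ℝ be m-times continuously differentiable with f'(x) > 0 for all x ∈ [0,1]. Define φ_t(x) = t·f(x) + (1 − t)·x for t ∈ [0,1] and x ∈ [0,1]. Then there exists a function v : [0,1] × ℝ → ℝ such that: (i) for each t ∈ [0,1], the map x ↦ v(t,x) is (m−1)-times continuously differentiable on ℝ and has compact support; (ii) v(t, t·f(x) + (1 − t)·x) = f(x) − x for all t ∈ [0,1] and all x ∈ [0,1]; and consequently (iii) φ_t(x) = x + ∫₀ᵗ v(s, φ_s(x)) ds for all t ∈ [0,1] and x ∈ [0,1], and in particular f(x) = φ₁(x) = x + ∫₀¹ v(t, φ_t(x)) dt for all x ∈ [0,1]. -/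
/-!
Extend `f` beyond `[0,1]` by its Taylor polynomials at the endpoints: the extension `F` is `Cᵐ`
on `ℝ`, so `F' > 0` on a convex open neighbourhood `U` of `[0,1]`. For each `t ∈ [0,1]` the map
`Φₜ = t F + (1 - t) id` then has positive derivative on `U`, hence is injective there with a `Cᵐ`
local inverse, and `v t` is `(F - id) ∘ Φₜ⁻¹` cut off by a bump function equal to `1` on
`Φₜ([0,1])`. Since `v t (φₜ x) = f x - x` does not depend on `t`, the flow equation only
integrates a constant.
-/

open Set Filter Topology Metric Function
open scoped ContDiff Manifold

section TaylorExtension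

variable {E : Type*} [NormedAddCommGroup E] [NormedSpace ℝ E] {g : ℝ → E} {a b : ℝ}

noncomputable def taylorExtendIcc (g : ℝ → E) (n : ℕ) (a b x : ℝ) : E :=
  if x < a then taylorWithinEval g n (Icc a b) a x
  else if b < x then taylorWithinEval g n (Icc a b) b x else g x

theorem taylorExtendIcc_eqOn_Icc (g : ℝ → E) (n : ℕ) :
    EqOn (taylorExtendIcc g n a b) g (Icc a b) := by
  intro x hx
  simp [taylorExtendIcc, not_lt.2 hx.1, not_lt.2 hx.2]

theorem taylorExtendIcc_eqOn_Iic (hab : a ≤ b) (g : ℝ → E) (n : ℕ) :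
    EqOn (taylorExtendIcc g n a b) (taylorWithinEval g n (Icc a b) a) (Iic a) := by
  intro x hx
  rcases (mem_Iic.1 hx).lt_or_eq with hxa | rfl
  · simp [taylorExtendIcc, hxa]
  · rw [taylorExtendIcc_eqOn_Icc g n (left_mem_Icc.2 hab), taylorWithinEval_self]

theorem taylorExtendIcc_eqOn_Ici (hab : a ≤ b) (g : ℝ → E) (n : ℕ) :
    EqOn (taylorExtendIcc g n a b) (taylorWithinEval g n (Icc a b) b) (Ici b) := by
  intro x hx
  rcases (mem_Ici.1 hx).lt_or_eq with hbx | rfl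
  · simp [taylorExtendIcc, hbx, not_lt.2 (hab.trans hbx.le)]
  · rw [taylorExtendIcc_eqOn_Icc g n (right_mem_Icc.2 hab), taylorWithinEval_self]

theorem hasDerivWithinAt_of_eqOn_of_isClosed {G G' P P' : ℝ → E} {A : Set ℝ} (hA : IsClosed A)
    (hG : EqOn G P A) (hG' : EqOn G' P' A) (hP : ∀ x ∈ A, HasDerivWithinAt P (P' x) A x)
    (x : ℝ) : HasDerivWithinAt G (G' x) A x := by
  by_cases hx : x ∈ A
  · rw [hG' hx]
    exact (hP x hx).congr hG (hG hx)
  · exact HasFDerivWithinAt.of_notMem_closure (by rwa [hA.closure_eq])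

theorem hasDerivAt_taylorExtendIcc (hab : a ≤ b) (hg : DifferentiableOn ℝ g (Icc a b)) (n : ℕ)
    (x : ℝ) : HasDerivAt (taylorExtendIcc g (n + 1) a b)
      (taylorExtendIcc (derivWithin g (Icc a b)) n a b x) x := by
  have hleft := hasDerivWithinAt_of_eqOn_of_isClosed isClosed_Iic
    (taylorExtendIcc_eqOn_Iic hab g (n + 1)) (taylorExtendIcc_eqOn_Iic hab _ n)
    (fun _ _ ↦ (hasDerivAt_taylorWithinEval_succ g n).hasDerivWithinAt) x
  have hmid := hasDerivWithinAt_of_eqOn_of_isClosed isClosed_Icc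
    (taylorExtendIcc_eqOn_Icc g (n + 1)) (taylorExtendIcc_eqOn_Icc _ n)
    (fun y hy ↦ (hg y hy).hasDerivWithinAt) x
  have hright := hasDerivWithinAt_of_eqOn_of_isClosed isClosed_Ici
    (taylorExtendIcc_eqOn_Ici hab g (n + 1)) (taylorExtendIcc_eqOn_Ici hab _ n)
    (fun _ _ ↦ (hasDerivAt_taylorWithinEval_succ g n).hasDerivWithinAt) x
  have hcover : Iic a ∪ Icc a b ∪ Ici b = univ := by
    rw [Iic_union_Icc_eq_Iic hab, Iic_union_Ici]
  simpa [hcover, hasDerivWithinAt_univ] using (hleft.union hmid).union hright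

theorem contDiff_taylorExtendIcc (hab : a < b) :
    ∀ {n : ℕ} {g : ℝ → E}, ContDiffOn ℝ n g (Icc a b) → ContDiff ℝ n (taylorExtendIcc g n a b)
  | 0, g, hg => by
    have hproj : taylorExtendIcc g 0 a b = fun x ↦ g (projIcc a b hab.le x) := by
      funext x
      rcases lt_or_ge x a with hxa | hax
      · simp [taylorExtendIcc, hxa, projIcc_of_le_left hab.le hxa.le]
      rcases le_or_gt x b with hxb | hbx
      · simp [taylorExtendIcc, not_lt.2 hax, not_lt.2 hxb, projIcc_of_mem hab.le ⟨hax, hxb⟩]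
      · simp [taylorExtendIcc, not_lt.2 hax, hbx, projIcc_of_right_le hab.le hbx.le]
    rw [hproj, Nat.cast_zero, contDiff_zero]
    exact hg.continuousOn.comp_continuous (continuous_subtype_val.comp continuous_projIcc)
      fun x ↦ (projIcc a b hab.le x).2
  | n + 1, g, hg => by
    have hD := hasDerivAt_taylorExtendIcc hab.le (hg.differentiableOn (by simp)) n
    rw [Nat.cast_succ, contDiff_succ_iff_deriv, funext fun x ↦ (hD x).deriv]
    exact ⟨fun x ↦ (hD x).differentiableAt, by simp,
      contDiff_taylorExtendIcc hab (hg.derivWithin (uniqueDiffOn_Icc hab) le_rfl)⟩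

end TaylorExtension

section LocalInverse

variable {E F G : Type*} [NormedAddCommGroup E] [NormedSpace ℝ E] [NormedAddCommGroup F]
  [NormedSpace ℝ F] [NormedAddCommGroup G] [NormedSpace ℝ G]

theorem IsCompact.exists_contDiff_tsupport_subset_eqOn_one [FiniteDimensional ℝ F] {K V : Set F}
    (hK : IsCompact K) (hV : IsOpen V) (hKV : K ⊆ V) :
    ∃ χ : F → ℝ, ContDiff ℝ ∞ χ ∧ HasCompactSupport χ ∧ tsupport χ ⊆ V ∧ EqOn χ 1 K := by
  obtain ⟨δ₁, hδ₁, hδ₁K⟩ := hK.exists_isCompact_cthickening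
  obtain ⟨δ₂, hδ₂, hδ₂V⟩ := hK.exists_cthickening_subset_open hV hKV
  obtain ⟨χ, hχ, -, hsupp, hone⟩ := exists_contMDiff_support_eq_eq_one_iff 𝓘(ℝ, F) (n := ⊤)
    isOpen_thickening hK.isClosed (self_subset_thickening (lt_min hδ₁ hδ₂) K)
  have htsupp : tsupport χ ⊆ cthickening (min δ₁ δ₂) K := by
    rw [tsupport, hsupp]
    exact closure_thickening_subset_cthickening _ K
  refine ⟨χ, contMDiff_iff_contDiff.1 hχ, ?_, ?_, fun x hx ↦ (hone x).1 hx⟩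
  · exact hδ₁K.of_isClosed_subset (isClosed_tsupport χ)
      (htsupp.trans (cthickening_mono (min_le_left _ _) K))
  · exact htsupp.trans ((cthickening_mono (min_le_right _ _) K).trans hδ₂V)

theorem ContDiff.smul_of_contDiffAt_tsupport {n : WithTop ℕ∞} {χ : E → ℝ} {g : E → G}
    (hχ : ContDiff ℝ n χ) (hg : ∀ x ∈ tsupport χ, ContDiffAt ℝ n g x) :
    ContDiff ℝ n (fun x ↦ χ x • g x) := by
  refine contDiff_iff_contDiffAt.2 fun x ↦ ?_
  by_cases hx : x ∈ tsupport χ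
  · exact hχ.contDiffAt.smul (hg x hx)
  · refine contDiffAt_const (c := (0 : G)).congr_of_eventuallyEq ?_
    filter_upwards [notMem_tsupport_iff_eventuallyEq.1 hx] with y hy
    simp [hy]

theorem ContDiffAt.contDiffAt_invFunOn [CompleteSpace E] {n : WithTop ℕ∞} {Φ : E → F}
    {e : E ≃L[ℝ] F} {U : Set E} {x : E} (hΦ : ContDiffAt ℝ n Φ x)
    (he : HasFDerivAt Φ (e : E →L[ℝ] F) x) (hn : n ≠ 0) (hU : U ∈ 𝓝 x) (hinj : InjOn Φ U) :
    ContDiffAt ℝ n (invFunOn Φ U) (Φ x) := by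
  refine (hΦ.to_localInverse he hn).congr_of_eventuallyEq ?_
  have hgU : ∀ᶠ y in 𝓝 (Φ x), hΦ.localInverse he hn y ∈ U :=
    (hΦ.to_localInverse he hn).continuousAt.preimage_mem_nhds
      (by rwa [hΦ.localInverse_apply_image he hn])
  filter_upwards [hgU, (hΦ.hasStrictFDerivAt' he hn).eventually_right_inverse] with y hyU hy
  conv_lhs => rw [← hy]
  exact hinj.leftInvOn_invFunOn hyU

theorem exists_contDiff_hasCompactSupport_comp_eqOn [CompleteSpace E] [FiniteDimensional ℝ F]
    {n : ℕ} (hn : n ≠ 0) {Φ : E → F} {h : E → G} {U K : Set E} (hU : IsOpen U)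
    (hinj : InjOn Φ U) (hK : IsCompact K) (hKU : K ⊆ U) (hΦ : ContDiff ℝ n Φ)
    (hΦ' : ∀ x ∈ U, ∃ e : E ≃L[ℝ] F, HasFDerivAt Φ (e : E →L[ℝ] F) x) (hh : ContDiff ℝ n h) :
    ∃ w : F → G, ContDiff ℝ n w ∧ HasCompactSupport w ∧ ∀ x ∈ K, w (Φ x) = h x := by
  set ψ := invFunOn Φ U
  have hKV : Φ '' K ⊆ interior {y | ContDiffAt ℝ n (fun y ↦ h (ψ y)) y} := by
    rintro _ ⟨x, hx, rfl⟩
    obtain ⟨e, he⟩ := hΦ' x (hKU hx)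
    have hψ := hΦ.contDiffAt.contDiffAt_invFunOn he (by exact_mod_cast hn)
      (hU.mem_nhds (hKU hx)) hinj
    exact mem_interior_iff_mem_nhds.2 ((hh.contDiffAt.comp _ hψ).eventually (by simp))
  obtain ⟨χ, hχ, hχc, hχV, hχ1⟩ :=
    (hK.image hΦ.continuous).exists_contDiff_tsupport_subset_eqOn_one isOpen_interior hKV
  refine ⟨fun y ↦ χ y • h (ψ y), ?_, hχc.smul_right, fun x hx ↦ ?_⟩
  · exact (hχ.of_le (by exact_mod_cast le_top)).smul_of_contDiffAt_tsupport
      fun y hy ↦ interior_subset (hχV hy)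
  · simp [hχ1 (mem_image_of_mem Φ hx), ψ, hinj.leftInvOn_invFunOn (hKU hx)]

end LocalInverse

theorem exists_contDiff_hasCompactSupport_linear_interpolation {n : ℕ} (hn : n ≠ 0)
    {F : ℝ → ℝ} (hF : ContDiff ℝ n F) {U K : Set ℝ} (hU : IsOpen U) (hUc : Convex ℝ U)
    (hK : IsCompact K) (hKU : K ⊆ U) (hF' : ∀ x ∈ U, 0 < deriv F x) {t : ℝ} (ht : t ∈ Icc 0 1) :
    ∃ w : ℝ → ℝ, ContDiff ℝ n w ∧ HasCompactSupport w ∧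
      ∀ x ∈ K, w (t * F x + (1 - t) * x) = F x - x := by
  set Φ : ℝ → ℝ := fun x ↦ t * F x + (1 - t) * x
  have hΦ : ContDiff ℝ n Φ := by fun_prop
  have hΦ' : ∀ x, HasDerivAt Φ (t * deriv F x + (1 - t)) x := fun x ↦ by
    simpa using (((hF.differentiable (by exact_mod_cast hn)) x).hasDerivAt.const_mul t).fun_add
      ((hasDerivAt_id x).const_mul (1 - t))
  have hΦ'pos : ∀ x ∈ U, 0 < t * deriv F x + (1 - t) := fun x hx ↦ by
    rcases ht.1.eq_or_lt with rfl | ht0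
    · norm_num
    · nlinarith [hF' x hx, ht.2]
  have hmono : StrictMonoOn Φ U := strictMonoOn_of_deriv_pos hUc hΦ.continuous.continuousOn
    fun x hx ↦ (hΦ' x).deriv ▸ hΦ'pos x (interior_subset hx)
  exact exists_contDiff_hasCompactSupport_comp_eqOn hn hU hmono.injOn hK hKU hΦ
    (fun x hx ↦ ⟨_, (hΦ' x).hasFDerivAt_equiv (hΦ'pos x hx).ne'⟩) (by fun_prop)

theorem exists_contDiff_hasCompactSupport_linear_interpolation_Icc {n : ℕ} (hn : n ≠ 0)
    {f : ℝ → ℝ} {a b : ℝ} (hab : a < b) (hf : ContDiffOn ℝ n f (Icc a b))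
    (hf' : ∀ x ∈ Icc a b, 0 < derivWithin f (Icc a b) x) {t : ℝ} (ht : t ∈ Icc 0 1) :
    ∃ w : ℝ → ℝ, ContDiff ℝ n w ∧ HasCompactSupport w ∧
      ∀ x ∈ Icc a b, w (t * f x + (1 - t) * x) = f x - x := by
  set F := taylorExtendIcc f n a b
  have hF : ContDiff ℝ n F := contDiff_taylorExtendIcc hab hf
  have hFf : EqOn F f (Icc a b) := taylorExtendIcc_eqOn_Icc f n
  have hF'pos : ∀ x ∈ Icc a b, 0 < deriv F x := fun x hx ↦ by
    rw [← ((hF.differentiable (by exact_mod_cast hn)) x).derivWithin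
      (uniqueDiffOn_Icc hab x hx), derivWithin_congr hFf (hFf hx)]
    exact hf' x hx
  have hF'cont : Continuous (deriv F) :=
    hF.continuous_deriv (by exact_mod_cast Nat.one_le_iff_ne_zero.2 hn)
  obtain ⟨δ, hδpos, hδ⟩ :=
    isCompact_Icc.exists_thickening_subset_open (isOpen_lt continuous_const hF'cont) hF'pos
  obtain ⟨w, hw, hwc, hwF⟩ := exists_contDiff_hasCompactSupport_linear_interpolation hn hF
    isOpen_thickening ((convex_Icc a b).thickening δ) isCompact_Icc
    (self_subset_thickening hδpos _) hδ ht
  exact ⟨w, hw, hwc, fun x hx ↦ by simpa [hFf hx] using hwF x hx⟩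

/-- Representation of a smooth strictly increasing function as the time-one
solution of an ODE: if `f` is `Cᵐ` on `[0,1]` (`m ≥ 2`) with `f' > 0`, then
there is a time-dependent vector field `v`, with `v t` of class `C^{m−1}` and
compactly supported, such that `v(t, t·f(x) + (1−t)·x) = f(x) − x`, and the
linear interpolation path `φ_t(x) = t·f(x) + (1−t)·x` solves
`φ_t(x) = x + ∫₀ᵗ v(s, φ_s(x)) ds`; in particular `f(x) = φ₁(x)`. -/
theorem monotone_function_as_ode_flow
    (m : ℕ) (hm : 2 ≤ m) (f : ℝ → ℝ)
    (hf : ContDiffOn ℝ m f (Icc 0 1))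
    (hf' : ∀ x ∈ Icc (0:ℝ) 1, 0 < derivWithin f (Icc 0 1) x) :
    ∃ v : ℝ → ℝ → ℝ,
      (∀ t ∈ Icc (0:ℝ) 1,
        ContDiff ℝ ((m - 1 : ℕ) : ℕ∞) (v t) ∧ HasCompactSupport (v t)) ∧
      (∀ t ∈ Icc (0:ℝ) 1, ∀ x ∈ Icc (0:ℝ) 1,
        v t (t * f x + (1 - t) * x) = f x - x) ∧
      (∀ t ∈ Icc (0:ℝ) 1, ∀ x ∈ Icc (0:ℝ) 1,
        t * f x + (1 - t) * x = x + ∫ s in (0:ℝ)..t, v s (s * f x + (1 - s) * x)) ∧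
      (∀ x ∈ Icc (0:ℝ) 1, f x = x + ∫ t in (0:ℝ)..1, v t (t * f x + (1 - t) * x)) := by
  have hfield (t : ℝ) (ht : t ∈ Icc (0 : ℝ) 1) :=
    exists_contDiff_hasCompactSupport_linear_interpolation_Icc (by omega) one_pos hf hf' ht
  choose! v hv using hfield
  have hpath : ∀ t ∈ Icc (0 : ℝ) 1, ∀ x ∈ Icc (0 : ℝ) 1,
      t * f x + (1 - t) * x = x + ∫ s in (0 : ℝ)..t, v s (s * f x + (1 - s) * x) := by
    intro t ht x hx
    rw [intervalIntegral.integral_congr (g := fun _ ↦ f x - x) fun s hs ↦ (hv s ?_).2.2 x hx]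
    · simp only [intervalIntegral.integral_const, sub_zero, smul_eq_mul]
      ring
    · rw [uIcc_of_le ht.1] at hs
      exact ⟨hs.1, hs.2.trans ht.2⟩
  refine ⟨v, fun t ht ↦ ⟨(hv t ht).1.of_le (by exact_mod_cast Nat.sub_le m 1), (hv t ht).2.1⟩,
    fun t ht ↦ (hv t ht).2.2, hpath, fun x hx ↦ ?_⟩
  simpa using hpath 1 (right_mem_Icc.2 zero_le_one) x hx
end

section
/- Let H be a Hilbert space of real-valued functions on ℝ with inner product ⟨·,·⟩ and norm ‖·‖_K, admitting a reproducing kernel K : ℝ × ℝ → ℝ. Let n > 2, let X₁, …, Xₙ be distinct real numbers such that the n × 2 matrix T with rows (1, X_i) has full rank 2, let Y ∈ ℝⁿ, and let λ > 0. Let Σ be the n × n matrix with entries Σ[i,j] = K(X_i, X_j), assumed positive semidefinite, let Σ_λ = Σ + nλ·I_n (which is invertible), and let P = T(Tᵀ Σ_λ⁻¹ T)⁻¹ Tᵀ Σ_λ⁻¹. Then the unique minimizer of (1/n)·Σ_{i=1}^n (Y_i − a₁ − a₂·X_i − h(X_i))² + λ·‖h‖_K² over (a₁, a₂, h) ∈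 ℝ × ℝ × H is given by v(x) = α₁ + α₂·x + Σ_{i=1}^n β_i K(x, X_i) with coefficient vectors β = Σ_λ⁻¹(I_n − P)Y and α = (Tᵀ Σ_λ⁻¹ T)⁻¹ Tᵀ Σ_λ⁻¹ Y; consequently the vector of fitted values (v(X₁), …, v(Xₙ))ᵀ equals A_λ Y where A_λ = P + Σ Σ_λ⁻¹ (I_n − P). -/
open Matrix

/-- The penalized least-squares criterion of the general spline smoothing
problem with parametric part `span{1, x}`. -/
noncomputable def splineObjective' {H : Type*} [NormedAddCommGroup H]
    [InnerProductSpace ℝ H] (ev : H →ₗ[ℝ] (ℝ → ℝ)) {n : ℕ}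
    (x y : Fin n → ℝ) (lam : ℝ) (p : ℝ × ℝ × H) : ℝ :=
  (1 / n) * ∑ i, (y i - p.1 - p.2.1 * x i - ev p.2.2 (x i)) ^ 2 +
    lam * ‖p.2.2‖ ^ 2

/-! With `v = Tα + Σβ` the fitted values of the candidate, the formulas give `Σ_λβ = (I − P)Y` and
`Tᵀβ = 0`: the residual `Y − v` is `nλβ` and is orthogonal to the affine functions. By the
reproducing property `⟨∑ βⱼ K(·, Xⱼ), w⟩ = ∑ βⱼ w(Xⱼ)`, this is the first-order condition of the
criterion at the candidate. The criterion being quadratic, its value at any `q` is then its value at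
the candidate plus `(1/n)‖fit(q − candidate)‖² + λ‖h − h₀‖²`, which vanishes only when `h = h₀`
and the affine parts agree at every `Xᵢ`, i.e. (as `T` is injective) only at the candidate. -/

namespace Matrix

variable {m k R : Type*} [Fintype k]

theorem mulVec_injective_of_rank_eq_card [Field R] {T : Matrix m k R}
    (hT : T.rank = Fintype.card k) : Function.Injective T.mulVec := by
  have hker : Module.finrank R (LinearMap.ker T.mulVecLin) = 0 := by
    have := LinearMap.finrank_range_add_finrank_ker T.mulVecLin
    rw [Module.finrank_fintype_fun_eq_card] at this
    change T.rank + _ = _ at this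
    omega
  exact LinearMap.ker_eq_bot.mp (Submodule.finrank_eq_zero.mp hker)

theorem PosSemidef.posDef_add_smul_one [DecidableEq m] {S : Matrix m m ℝ} (hS : S.PosSemidef)
    {c : ℝ} (hc : 0 < c) : (S + c • 1).PosDef := by
  refine PosDef.posSemidef_add hS ?_
  rw [smul_one_eq_diagonal]
  exact posDef_diagonal_iff.2 fun _ => hc

theorem PosDef.isUnit_det_transpose_mul_inv_mul [Fintype m] [DecidableEq m] [DecidableEq k]
    {S : Matrix m m ℝ} (hS : S.PosDef) {T : Matrix m k ℝ} (hT : Function.Injective T.mulVec) :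
    IsUnit (Tᵀ * S⁻¹ * T).det := by
  have hM := hS.inv.conjTranspose_mul_mul_same hT
  rw [conjTranspose_eq_transpose_of_trivial] at hM
  exact (isUnit_iff_isUnit_det _).mp hM.isUnit

variable [Fintype m] [CommRing R] [DecidableEq m] [DecidableEq k]

theorem transpose_mulVec_inv_mulVec_one_sub_proj {S : Matrix m m R} {T : Matrix m k R}
    (hM : IsUnit (Tᵀ * S⁻¹ * T).det) (v : m → R) :
    Tᵀ *ᵥ (S⁻¹ *ᵥ ((1 - T * (Tᵀ * S⁻¹ * T)⁻¹ * Tᵀ * S⁻¹) *ᵥ v)) = 0 := by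
  have : Tᵀ * S⁻¹ * (T * (Tᵀ * S⁻¹ * T)⁻¹ * Tᵀ * S⁻¹)
      = (Tᵀ * S⁻¹ * T) * (Tᵀ * S⁻¹ * T)⁻¹ * (Tᵀ * S⁻¹) := by
    simp only [Matrix.mul_assoc]
  rw [mulVec_mulVec, mulVec_mulVec, Matrix.mul_sub, Matrix.mul_one, this, mul_nonsing_inv _ hM,
    Matrix.one_mul, sub_self, zero_mulVec]

theorem sub_mulVec_eq_smul_of_eq_inv_add_smul_one {S : Matrix m m R} {c : R}
    (hS : IsUnit (S + c • 1).det) {v w : m → R} (hw : w = (S + c • 1)⁻¹ *ᵥ v) :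
    v - S *ᵥ w = c • w := by
  have hv : S *ᵥ w + c • w = v := by
    have : (S + c • 1) *ᵥ w = v := by rw [hw, mulVec_mulVec, mul_nonsing_inv _ hS, one_mulVec]
    rwa [add_mulVec, smul_mulVec, one_mulVec] at this
  rw [← hv, add_sub_cancel_left]

end Matrix

theorem apply_sum_smul_kernel_eq_mulVec {H : Type*} [AddCommGroup H] [Module ℝ H]
    (ev : H →ₗ[ℝ] (ℝ → ℝ)) (k : ℝ → H) {n : ℕ} {X : Fin n → ℝ} {Sg : Matrix (Fin n) (Fin n) ℝ}
    (hSg : ∀ i j, Sg i j = ev (k (X j)) (X i)) (β : Fin n → ℝ) (i : Fin n) :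
    ev (∑ j, β j • k (X j)) (X i) = (Sg *ᵥ β) i := by
  simp only [map_sum, map_smul, Finset.sum_apply, Pi.smul_apply, smul_eq_mul, mulVec,
    dotProduct, hSg, mul_comm]

section DesignMatrix

variable {n : ℕ} {X : Fin n → ℝ} {T : Matrix (Fin n) (Fin 2) ℝ}
  (hT : ∀ i, T i 0 = 1 ∧ T i 1 = X i)
include hT

theorem mulVec_apply_eq_of_design (c : Fin 2 → ℝ) (i : Fin n) :
    (T *ᵥ c) i = c 0 + c 1 * X i := by
  simp only [mulVec, dotProduct, Fin.sum_univ_two, (hT i).1, (hT i).2]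
  ring

theorem sum_mul_affine_eq_zero_of_design {β : Fin n → ℝ} (hβ : Tᵀ *ᵥ β = 0) (c₀ c₁ : ℝ) :
    ∑ i, β i * (c₀ + c₁ * X i) = 0 := by
  have h : β ⬝ᵥ (T *ᵥ ![c₀, c₁]) = 0 := by
    rw [dotProduct_mulVec, ← mulVec_transpose, hβ, zero_dotProduct]
  simpa [dotProduct, mulVec_apply_eq_of_design hT] using h

theorem affine_eq_zero_of_design (hTinj : Function.Injective T.mulVec) (a b : ℝ)
    (h : ∀ i, a + b * X i = 0) : a = 0 ∧ b = 0 := by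
  have h0 : ![a, b] = 0 := hTinj <| by
    ext i
    simpa [mulVec_apply_eq_of_design hT] using h i
  exact ⟨congrFun h0 0, congrFun h0 1⟩

end DesignMatrix

section Spline

variable {H : Type*} [NormedAddCommGroup H] [InnerProductSpace ℝ H]
  (ev : H →ₗ[ℝ] (ℝ → ℝ)) {n : ℕ} (X : Fin n → ℝ)

def splineFit (p : ℝ × ℝ × H) (i : Fin n) : ℝ :=
  p.1 + p.2.1 * X i + ev p.2.2 (X i)

theorem splineFit_add (p d : ℝ × ℝ × H) (i : Fin n) :
    splineFit ev X (p + d) i = splineFit ev X p i + splineFit ev X d i := by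
  simp only [splineFit, Prod.fst_add, Prod.snd_add, map_add, Pi.add_apply]
  ring

theorem splineObjective'_eq (Y : Fin n → ℝ) (lam : ℝ) (p : ℝ × ℝ × H) :
    splineObjective' ev X Y lam p =
      (1 / n) * ∑ i, (Y i - splineFit ev X p i) ^ 2 + lam * ‖p.2.2‖ ^ 2 := by
  simp only [splineObjective', splineFit, sub_add_eq_sub_sub]

variable {ev X} {Y : Fin n → ℝ} {lam : ℝ} {p : ℝ × ℝ × H}

/-- The first-order condition of `splineObjective'` at `p` in every direction `d`. -/
def IsSplineStationary (ev : H →ₗ[ℝ] (ℝ → ℝ)) (X Y : Fin n → ℝ) (lam : ℝ)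
    (p : ℝ × ℝ × H) : Prop :=
  ∀ d : ℝ × ℝ × H,
    (1 / n) * ∑ i, (Y i - splineFit ev X p i) * splineFit ev X d i = lam * inner ℝ p.2.2 d.2.2

theorem IsSplineStationary.splineObjective'_eq_add (hp : IsSplineStationary ev X Y lam p)
    (q : ℝ × ℝ × H) :
    splineObjective' ev X Y lam q = splineObjective' ev X Y lam p +
      ((1 / n) * ∑ i, splineFit ev X (q - p) i ^ 2 + lam * ‖q.2.2 - p.2.2‖ ^ 2) := by
  obtain ⟨d, rfl⟩ : ∃ d, q = p + d := ⟨q - p, by abel⟩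
  have hsq : ∀ i, (Y i - splineFit ev X (p + d) i) ^ 2 = (Y i - splineFit ev X p i) ^ 2
      - 2 * ((Y i - splineFit ev X p i) * splineFit ev X d i) + splineFit ev X d i ^ 2 := by
    intro i
    rw [splineFit_add]
    ring
  have hnorm : ‖p.2.2 + d.2.2‖ ^ 2 = ‖p.2.2‖ ^ 2 + 2 * inner ℝ p.2.2 d.2.2 + ‖d.2.2‖ ^ 2 :=
    norm_add_sq_real _ _
  have hstat := hp d
  simp only [splineObjective'_eq, hsq, Finset.sum_add_distrib, Finset.sum_sub_distrib,
    ← Finset.mul_sum, add_sub_cancel_left, Prod.snd_add, hnorm] at hstat ⊢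
  linear_combination (-2) * hstat

theorem IsSplineStationary.isMinOn (hp : IsSplineStationary ev X Y lam p) (hlam : 0 ≤ lam)
    (q : ℝ × ℝ × H) : splineObjective' ev X Y lam p ≤ splineObjective' ev X Y lam q := by
  rw [hp.splineObjective'_eq_add q]
  have : 0 ≤ ∑ i, splineFit ev X (q - p) i ^ 2 := Finset.sum_nonneg fun _ _ => sq_nonneg _
  have : 0 ≤ lam * ‖q.2.2 - p.2.2‖ ^ 2 := by positivity
  have : 0 ≤ 1 / (n : ℝ) := by positivity
  nlinarith

theorem eq_zero_of_splineFit_eq_zero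
    (haff : ∀ a b : ℝ, (∀ i, a + b * X i = 0) → a = 0 ∧ b = 0) {d : ℝ × ℝ × H}
    (hfit : ∀ i, splineFit ev X d i = 0) (hd : d.2.2 = 0) : d = 0 := by
  obtain ⟨a, b, h⟩ := d
  obtain rfl : h = 0 := hd
  obtain ⟨rfl, rfl⟩ := haff a b fun i => by simpa [splineFit] using hfit i
  rfl

theorem IsSplineStationary.eq_of_le (hp : IsSplineStationary ev X Y lam p) (hn : 0 < n)
    (hlam : 0 < lam) (haff : ∀ a b : ℝ, (∀ i, a + b * X i = 0) → a = 0 ∧ b = 0)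
    {q : ℝ × ℝ × H} (hq : splineObjective' ev X Y lam q ≤ splineObjective' ev X Y lam p) :
    q = p := by
  have hn' : 0 < 1 / (n : ℝ) := by positivity
  have hfit : 0 ≤ 1 / (n : ℝ) * ∑ i, splineFit ev X (q - p) i ^ 2 :=
    mul_nonneg hn'.le (Finset.sum_nonneg fun _ _ => sq_nonneg _)
  have hpen : 0 ≤ lam * ‖q.2.2 - p.2.2‖ ^ 2 := by positivity
  rw [hp.splineObjective'_eq_add q] at hq
  have hsum0 : ∑ i, splineFit ev X (q - p) i ^ 2 = 0 :=
    (mul_eq_zero.mp (by linarith : _ = (0 : ℝ))).resolve_left hn'.ne'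
  have hpen0 : ‖q.2.2 - p.2.2‖ = 0 := pow_eq_zero_iff two_ne_zero |>.mp
    ((mul_eq_zero.mp (by linarith : lam * ‖q.2.2 - p.2.2‖ ^ 2 = 0)).resolve_left hlam.ne')
  rw [Finset.sum_eq_zero_iff_of_nonneg fun _ _ => sq_nonneg _] at hsum0
  refine sub_eq_zero.mp (eq_zero_of_splineFit_eq_zero haff
    (fun i => pow_eq_zero_iff two_ne_zero |>.mp (hsum0 i (Finset.mem_univ i))) ?_)
  rwa [norm_eq_zero, ← Prod.snd_sub, ← Prod.snd_sub] at hpen0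

variable (k : ℝ → H) (hrepr : ∀ (x : ℝ) (h : H), (inner ℝ (k x) h : ℝ) = ev h x)
include hrepr

theorem inner_sum_smul_kernel (β : Fin n → ℝ) (w : H) :
    inner ℝ (∑ j, β j • k (X j)) w = ∑ j, β j * ev w (X j) := by
  simp only [sum_inner, real_inner_smul_left, hrepr]

theorem isSplineStationary_of_residual (hn : n ≠ 0) {a b : ℝ} {β : Fin n → ℝ}
    (hβ : ∀ c₀ c₁ : ℝ, ∑ i, β i * (c₀ + c₁ * X i) = 0)
    (hres : ∀ i, Y i - splineFit ev X (a, b, ∑ j, β j • k (X j)) i = n * lam * β i) :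
    IsSplineStationary ev X Y lam (a, b, ∑ j, β j • k (X j)) := by
  intro d
  have hsplit : ∑ i, β i * splineFit ev X d i
      = ∑ i, β i * (d.1 + d.2.1 * X i) + ∑ i, β i * ev d.2.2 (X i) := by
    rw [← Finset.sum_add_distrib]
    exact Finset.sum_congr rfl fun i _ => by rw [splineFit]; ring
  have hn' : (n : ℝ) ≠ 0 := Nat.cast_ne_zero.mpr hn
  simp only [hres, mul_assoc, ← Finset.mul_sum, hsplit, hβ, zero_add,
    inner_sum_smul_kernel k hrepr]
  field_simp

end Spline

theorem smoothing_spline_closed_form_general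
    {H : Type*} [NormedAddCommGroup H] [InnerProductSpace ℝ H]
    (ev : H →ₗ[ℝ] (ℝ → ℝ)) (k : ℝ → H)
    (hrepr : ∀ (x : ℝ) (h : H), (inner ℝ (k x) h : ℝ) = ev h x)
    (n : ℕ) (X : Fin n → ℝ)
    (Y : Fin n → ℝ) (lam : ℝ) (hlam : 0 < lam)
    (T : Matrix (Fin n) (Fin 2) ℝ) (hT : ∀ i, T i 0 = 1 ∧ T i 1 = X i)
    (hTrank : T.rank = 2)
    (Sg : Matrix (Fin n) (Fin n) ℝ) (hSg : ∀ i j, Sg i j = ev (k (X j)) (X i))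
    (hpsd : Sg.PosSemidef)
    (Sgl : Matrix (Fin n) (Fin n) ℝ) (hSgl : Sgl = Sg + ((n : ℝ) * lam) • 1)
    (P : Matrix (Fin n) (Fin n) ℝ) (hP : P = T * (Tᵀ * Sgl⁻¹ * T)⁻¹ * Tᵀ * Sgl⁻¹)
    (β : Fin n → ℝ) (hβ : β = Sgl⁻¹ *ᵥ ((1 - P) *ᵥ Y))
    (α : Fin 2 → ℝ) (hα : α = (Tᵀ * Sgl⁻¹ * T)⁻¹ *ᵥ (Tᵀ *ᵥ (Sgl⁻¹ *ᵥ Y)))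
    (A : Matrix (Fin n) (Fin n) ℝ) (hA : A = P + Sg * Sgl⁻¹ * (1 - P)) :
    IsUnit Sgl.det ∧
    (∀ q : ℝ × ℝ × H,
      splineObjective' ev X Y lam (α 0, α 1, ∑ i, β i • k (X i)) ≤
        splineObjective' ev X Y lam q) ∧
    (∀ p : ℝ × ℝ × H,
      (∀ q : ℝ × ℝ × H,
        splineObjective' ev X Y lam p ≤ splineObjective' ev X Y lam q) →
      p = (α 0, α 1, ∑ i, β i • k (X i))) ∧
    ∀ i : Fin n,
      α 0 + α 1 * X i + ev (∑ j, β j • k (X j)) (X i) = (A *ᵥ Y) i := by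
  have hn : 0 < n := by
    have := T.rank_le_card_height
    rw [hTrank, Fintype.card_fin] at this
    omega
  have hTinj : Function.Injective T.mulVec :=
    mulVec_injective_of_rank_eq_card (hTrank.trans (Fintype.card_fin 2).symm)
  have hSglPD : Sgl.PosDef := hSgl ▸ hpsd.posDef_add_smul_one (by positivity)
  have hSglu : IsUnit Sgl.det := (isUnit_iff_isUnit_det _).mp hSglPD.isUnit
  have hTα : T *ᵥ α = P *ᵥ Y := by
    rw [hα, hP]
    simp only [mulVec_mulVec, Matrix.mul_assoc]
  have hTβ : Tᵀ *ᵥ β = 0 := by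
    rw [hβ, hP]
    exact transpose_mulVec_inv_mulVec_one_sub_proj
      (hSglPD.isUnit_det_transpose_mul_inv_mul hTinj) Y
  have hfit : ∀ i, splineFit ev X (α 0, α 1, ∑ j, β j • k (X j)) i
      = (P *ᵥ Y) i + (Sg *ᵥ β) i := fun i => by
    rw [splineFit, ← mulVec_apply_eq_of_design hT, hTα,
      apply_sum_smul_kernel_eq_mulVec ev k hSg]
  have hstat : IsSplineStationary ev X Y lam (α 0, α 1, ∑ j, β j • k (X j)) := by
    refine isSplineStationary_of_residual k hrepr hn.ne'
      (sum_mul_affine_eq_zero_of_design hT hTβ) fun i => ?_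
    have hres := congrFun (sub_mulVec_eq_smul_of_eq_inv_add_smul_one
      (hSgl ▸ hSglu) (hSgl ▸ hβ)) i
    simp only [Pi.sub_apply, Pi.smul_apply, smul_eq_mul, sub_mulVec, one_mulVec] at hres
    rw [hfit]
    linarith
  refine ⟨hSglu, hstat.isMinOn hlam.le,
    fun p hp => hstat.eq_of_le hn hlam (affine_eq_zero_of_design hT hTinj) (hp _), fun i => ?_⟩
  calc α 0 + α 1 * X i + ev (∑ j, β j • k (X j)) (X i)
      = (P *ᵥ Y) i + (Sg *ᵥ β) i := hfit i
    _ = (A *ᵥ Y) i := by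
      rw [hA, hβ, add_mulVec]
      simp only [mulVec_mulVec, Matrix.mul_assoc, Pi.add_apply]

/-- Closed-form coefficient formulas for the smoothing spline: with kernel
matrix `Σ[i,j] = K(Xᵢ,Xⱼ)`, design matrix `T` with rows `(1, Xᵢ)` of full rank,
`Σ_λ = Σ + nλI` (invertible) and `P = T(TᵀΣ_λ⁻¹T)⁻¹TᵀΣ_λ⁻¹`, the unique
minimizer of the penalized criterion is
`v(x) = α₁ + α₂x + ∑ᵢ βᵢ K(x,Xᵢ)` with `β = Σ_λ⁻¹(I − P)Y` and
`α = (TᵀΣ_λ⁻¹T)⁻¹TᵀΣ_λ⁻¹Y`, and the fitted values are `A_λY` with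
`A_λ = P + ΣΣ_λ⁻¹(I − P)`. -/
theorem smoothing_spline_closed_form
    {H : Type*} [NormedAddCommGroup H] [InnerProductSpace ℝ H] [CompleteSpace H]
    (ev : H →ₗ[ℝ] (ℝ → ℝ)) (k : ℝ → H)
    (hrepr : ∀ (x : ℝ) (h : H), (inner ℝ (k x) h : ℝ) = ev h x)
    (n : ℕ) (hn : 2 < n) (X : Fin n → ℝ) (hX : Function.Injective X)
    (Y : Fin n → ℝ) (lam : ℝ) (hlam : 0 < lam)
    (T : Matrix (Fin n) (Fin 2) ℝ) (hT : ∀ i, T i 0 = 1 ∧ T i 1 = X i)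
    (hTrank : T.rank = 2)
    (Sg : Matrix (Fin n) (Fin n) ℝ) (hSg : ∀ i j, Sg i j = ev (k (X j)) (X i))
    (hpsd : Sg.PosSemidef)
    (Sgl : Matrix (Fin n) (Fin n) ℝ) (hSgl : Sgl = Sg + ((n : ℝ) * lam) • 1)
    (P : Matrix (Fin n) (Fin n) ℝ) (hP : P = T * (Tᵀ * Sgl⁻¹ * T)⁻¹ * Tᵀ * Sgl⁻¹)
    (β : Fin n → ℝ) (hβ : β = Sgl⁻¹ *ᵥ ((1 - P) *ᵥ Y))
    (α : Fin 2 → ℝ) (hα : α = (Tᵀ * Sgl⁻¹ * T)⁻¹ *ᵥ (Tᵀ *ᵥ (Sgl⁻¹ *ᵥ Y)))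
    (A : Matrix (Fin n) (Fin n) ℝ) (hA : A = P + Sg * Sgl⁻¹ * (1 - P)) :
    IsUnit Sgl.det ∧
    (∀ q : ℝ × ℝ × H,
      splineObjective' ev X Y lam (α 0, α 1, ∑ i, β i • k (X i)) ≤
        splineObjective' ev X Y lam q) ∧
    (∀ p : ℝ × ℝ × H,
      (∀ q : ℝ × ℝ × H,
        splineObjective' ev X Y lam p ≤ splineObjective' ev X Y lam q) →
      p = (α 0, α 1, ∑ i, β i • k (X i))) ∧
    ∀ i : Fin n,
      α 0 + α 1 * X i + ev (∑ j, β j • k (X j)) (X i) = (A *ᵥ Y) i :=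
  smoothing_spline_closed_form_general ev k hrepr n X Y lam hlam T hT hTrank Sg hSg hpsd Sgl hSgl P
    hP β hβ α hα A hA
end

section
/- Let n > 2 and λ > 0. Let Σ be an n × n symmetric positive semidefinite real matrix, let T be an n × 2 real matrix of full column rank, let Σ_λ = Σ + nλ·I_n, let P = T(Tᵀ Σ_λ⁻¹ T)⁻¹ Tᵀ Σ_λ⁻¹, and let A_λ = P + Σ Σ_λ⁻¹ (I_n − P). Then for every x ∈ ℝⁿ, ‖A_λ x‖₂ ≤ 2‖x‖₂, where ‖·‖₂ denotes the Euclidean norm on ℝⁿ. -/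
/-!
With `c = nλ` and `S = Σ + c I`, the identity `Σ S⁻¹ = I - c S⁻¹` rewrites `A` as `I - c M` with
`M = S⁻¹ (I - P)`. Full column rank of `T` makes `Tᵀ S⁻¹ T` positive definite, so `P` is an
idempotent, and then `M` is symmetric with `M S M = M`. Since `S ≥ c I`, this gives
`c ‖M x‖² ≤ ⟪M x, S M x⟫ = ⟪x, M x⟫ ≤ ‖x‖ ‖M x‖`, i.e. `‖c M x‖ ≤ ‖x‖`, and the triangle
inequality yields `‖A x‖ ≤ 2 ‖x‖`.
-/

open Matrix

theorem LinearMap.IsSymmetric.mul_norm_le_of_comp_comp_self {E : Type*}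
    [NormedAddCommGroup E] [InnerProductSpace ℝ E] {M S : E →ₗ[ℝ] E} (hM : M.IsSymmetric)
    (hMSM : M ∘ₗ S ∘ₗ M = M) {c : ℝ} (hS : ∀ y, c * ‖y‖ ^ 2 ≤ inner ℝ y (S y)) (x : E) :
    c * ‖M x‖ ≤ ‖x‖ := by
  have key : c * ‖M x‖ ^ 2 ≤ ‖x‖ * ‖M x‖ :=
    calc c * ‖M x‖ ^ 2 ≤ inner ℝ (M x) (S (M x)) := hS (M x)
      _ = inner ℝ x (M (S (M x))) := hM x _
      _ = inner ℝ x (M x) := congrArg _ (LinearMap.congr_fun hMSM x)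
      _ ≤ ‖x‖ * ‖M x‖ := real_inner_le_norm x (M x)
  rcases (norm_nonneg (M x)).eq_or_lt with h | h
  · rw [← h, mul_zero]
    exact norm_nonneg x
  · rw [sq, ← mul_assoc] at key
    exact le_of_mul_le_mul_right key h

theorem Matrix.mulVec_injective_of_rank_eq_card_s11 {K ι κ : Type*} [Field K] [Fintype ι]
    [Fintype κ] {T : Matrix ι κ K} (hT : T.rank = Fintype.card κ) :
    Function.Injective T.mulVec := by
  rw [mulVec_injective_iff, linearIndependent_iff_card_eq_finrank_span, ← hT,
    rank_eq_finrank_span_cols]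
  rfl

theorem Matrix.PosSemidef.mul_norm_sq_le_inner_toEuclideanLin_add_smul_one {ι : Type*}
    [Fintype ι] [DecidableEq ι] {Sg : Matrix ι ι ℝ} (hSg : Sg.PosSemidef) (c : ℝ)
    (y : EuclideanSpace ℝ ι) :
    c * ‖y‖ ^ 2 ≤ inner ℝ y (toEuclideanLin (Sg + c • 1) y) := by
  have h := hSg.dotProduct_mulVec_nonneg (WithLp.ofLp y)
  rw [toLpLin_apply, EuclideanSpace.inner_eq_star_dotProduct, ← real_inner_self_eq_norm_sq,
    EuclideanSpace.inner_eq_star_dotProduct]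
  simp only [star_trivial, add_mulVec, smul_mulVec, one_mulVec, add_dotProduct, smul_dotProduct,
    smul_eq_mul] at h ⊢
  rw [dotProduct_comm] at h
  linarith

namespace Matrix

variable {R ι κ : Type*} [CommRing R] [Fintype ι] [DecidableEq ι] [Fintype κ] [DecidableEq κ]

/-- The hat matrix of generalized least squares: the projection onto the column space of `T`
that is orthogonal for the inner product `xᵀ S⁻¹ y`. -/
noncomputable def glsProjection (S : Matrix ι ι R) (T : Matrix ι κ R) : Matrix ι ι R :=
  T * (Tᵀ * S⁻¹ * T)⁻¹ * Tᵀ * S⁻¹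

variable {S : Matrix ι ι R} {T : Matrix ι κ R}

theorem glsProjection_mul_self (hG : IsUnit (Tᵀ * S⁻¹ * T).det) :
    glsProjection S T * glsProjection S T = glsProjection S T := by
  set G := Tᵀ * S⁻¹ * T
  calc glsProjection S T * glsProjection S T = T * (G⁻¹ * G) * G⁻¹ * Tᵀ * S⁻¹ := by
        simp only [glsProjection, G, Matrix.mul_assoc]
    _ = glsProjection S T := by rw [nonsing_inv_mul _ hG, Matrix.mul_one]; rfl

theorem isSymm_inv_mul_one_sub_glsProjection (hS : S.IsSymm) :
    (S⁻¹ * (1 - glsProjection S T)).IsSymm := by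
  have hSi : S⁻¹ᵀ = S⁻¹ := by rw [transpose_nonsing_inv, hS.eq]
  have hGi : (Tᵀ * S⁻¹ * T)⁻¹ᵀ = (Tᵀ * S⁻¹ * T)⁻¹ := by
    rw [transpose_nonsing_inv, transpose_mul, transpose_mul, hSi, transpose_transpose,
      Matrix.mul_assoc]
  simp only [IsSymm, glsProjection, Matrix.mul_sub, Matrix.mul_one, transpose_sub, transpose_mul,
    hSi, hGi, transpose_transpose]
  simp only [Matrix.mul_assoc]

theorem inv_mul_one_sub_glsProjection_mul_mul_self (hS : IsUnit S.det)
    (hG : IsUnit (Tᵀ * S⁻¹ * T).det) :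
    S⁻¹ * (1 - glsProjection S T) * S * (S⁻¹ * (1 - glsProjection S T)) =
      S⁻¹ * (1 - glsProjection S T) := by
  have hQ : (1 - glsProjection S T) * (1 - glsProjection S T) = 1 - glsProjection S T := by
    rw [Matrix.sub_mul, Matrix.one_mul, Matrix.mul_sub, Matrix.mul_one, glsProjection_mul_self hG,
      sub_self, sub_zero]
  rw [Matrix.mul_assoc, Matrix.mul_assoc, ← Matrix.mul_assoc S, mul_nonsing_inv _ hS,
    Matrix.one_mul, hQ]

theorem add_sub_smul_mul_inv_mul_one_sub (hS : IsUnit S.det) (P : Matrix ι ι R) (c : R) :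
    P + (S - c • 1) * S⁻¹ * (1 - P) = 1 - c • (S⁻¹ * (1 - P)) := by
  rw [Matrix.sub_mul, mul_nonsing_inv _ hS, smul_mul_assoc, Matrix.one_mul, Matrix.sub_mul,
    Matrix.one_mul, smul_mul_assoc]
  abel

end Matrix

/-- Spectral bound on the smoothing-spline influence matrix: with `Σ` symmetric
positive semidefinite, `T` of full column rank `2`, `Σ_λ = Σ + nλI`,
`P = T(TᵀΣ_λ⁻¹T)⁻¹TᵀΣ_λ⁻¹` and `A_λ = P + ΣΣ_λ⁻¹(I − P)`, the Euclidean
operator norm of `A_λ` is at most `2`. -/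
theorem influence_matrix_bound
    (n : ℕ) (hn : 2 < n) (lam : ℝ) (hlam : 0 < lam)
    (Sg : Matrix (Fin n) (Fin n) ℝ) (hpsd : Sg.PosSemidef)
    (T : Matrix (Fin n) (Fin 2) ℝ) (hTrank : T.rank = 2)
    (Sgl : Matrix (Fin n) (Fin n) ℝ) (hSgl : Sgl = Sg + ((n : ℝ) * lam) • 1)
    (P : Matrix (Fin n) (Fin n) ℝ) (hP : P = T * (Tᵀ * Sgl⁻¹ * T)⁻¹ * Tᵀ * Sgl⁻¹)
    (A : Matrix (Fin n) (Fin n) ℝ) (hA : A = P + Sg * Sgl⁻¹ * (1 - P)) :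
    ∀ x : Fin n → ℝ,
      Real.sqrt (∑ i, ((A *ᵥ x) i) ^ 2) ≤ 2 * Real.sqrt (∑ i, (x i) ^ 2) := by
  intro x
  set c : ℝ := n * lam
  have hc : 0 < c := mul_pos (by exact_mod_cast (by omega : 0 < n)) hlam
  have hSgl_pd : Sgl.PosDef := hSgl ▸ PosDef.posSemidef_add hpsd (PosDef.one.smul hc)
  have hG : (Tᵀ * Sgl⁻¹ * T).PosDef := by
    simpa only [conjTranspose_eq_transpose_of_trivial] using
      hSgl_pd.inv.conjTranspose_mul_mul_same
        (mulVec_injective_of_rank_eq_card_s11 (by simpa using hTrank))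
  set M := Sgl⁻¹ * (1 - glsProjection Sgl T)
  have hA_eq : A = 1 - c • M := by
    rw [hA, hP, show Sg = Sgl - c • 1 by rw [hSgl]; abel]
    exact add_sub_smul_mul_inv_mul_one_sub hSgl_pd.det_pos.ne'.isUnit _ c
  have hM : c * ‖toEuclideanLin M (WithLp.toLp 2 x)‖ ≤ ‖WithLp.toLp 2 x‖ := by
    refine LinearMap.IsSymmetric.mul_norm_le_of_comp_comp_self (S := toEuclideanLin Sgl) ?_ ?_
      (hSgl ▸ hpsd.mul_norm_sq_le_inner_toEuclideanLin_add_smul_one c) _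
    · exact isSymmetric_toEuclideanLin_iff.mpr <| isHermitian_iff_isSymm.mpr <|
        isSymm_inv_mul_one_sub_glsProjection (isHermitian_iff_isSymm.mp hSgl_pd.1)
    · rw [← toLpLin_mul_same, ← toLpLin_mul_same, ← Matrix.mul_assoc,
        inv_mul_one_sub_glsProjection_mul_mul_self hSgl_pd.det_pos.ne'.isUnit
          hG.det_pos.ne'.isUnit]
  have hnorm (v : Fin n → ℝ) : Real.sqrt (∑ i, v i ^ 2) = ‖WithLp.toLp 2 v‖ := by
    simp [EuclideanSpace.norm_eq]
  rw [hnorm, hnorm]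
  calc ‖WithLp.toLp 2 (A *ᵥ x)‖
      = ‖WithLp.toLp 2 x - c • toEuclideanLin M (WithLp.toLp 2 x)‖ := by
        rw [hA_eq, sub_mulVec, one_mulVec, smul_mulVec]; rfl
    _ ≤ ‖WithLp.toLp 2 x‖ + c * ‖toEuclideanLin M (WithLp.toLp 2 x)‖ :=
        (norm_sub_le _ _).trans_eq (by rw [norm_smul, Real.norm_of_nonneg hc.le])
    _ ≤ 2 * ‖WithLp.toLp 2 x‖ := by linarith
end
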